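/- Let n ≥ 2 and t > 0, and let E be a nonempty compact subset of the open unit ball of n-dimensional Euclidean space such that ρ(x,y) ≤ t for all x, y ∈ E, where ρ(x,y) = 2·arsinh(‖x−y‖/√((1−‖x‖²)(1−‖y‖²))) is the hyperbolic distance. Then there exists a point z with ‖z‖ < 1 such that ρ(z,x) ≤ arsinh(√(2n/(n+1))·sinh(t/2)) for every x ∈ E. -/

import Mathlib

/-!
Lift the Poincaré ball to the upper sheet of the hyperboloid `⟨X, X⟩ = -1` in `ℝ × ℝⁿ` with the
Minkowski form `⟨u, v⟩ = u₂ ⬝ v₂ - u₁ v₁`; then `cosh ρ(x, y) = -⟨X, Y⟩`, so the lifted set `S`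
satisfies `-cosh t ≤ ⟨X, Y⟩`. Let `m` minimise `⟨v, v⟩` over the convex hull of `S`. The
first-order condition `⟨m, m⟩ ≤ ⟨m, X⟩` on `S` says that the point of the hyperboloid on the ray
through `m` lies within hyperbolic distance `arcosh √(-⟨m, m⟩)` of every point of `S`.

By Carathéodory, `m` is a positive convex combination of affinely independent points of `S`, and
the first-order condition is an equality at each of them. They therefore lie on the hyperplane
`⟨m, ·⟩ = ⟨m, m⟩`, which misses the origin, so there are at most `n + 1` of them. Expanding
`⟨m, m⟩` in these points and applying Cauchy–Schwarz to the weights gives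
`-⟨m, m⟩ ≤ cosh t - (cosh t - 1) / (n + 1) = 1 + (2n / (n + 1)) sinh² (t / 2)`.
-/

open Real Finset Filter Topology Module
open scoped InnerProductSpace

theorem IsCompact.convexHull_of_finiteDimensional {V : Type*} [NormedAddCommGroup V]
    [NormedSpace ℝ V] [FiniteDimensional ℝ V] {S : Set V} (hS : IsCompact S) :
    IsCompact (convexHull ℝ S) := by
  have hull_eq : convexHull ℝ S = ⋃ k ∈ range (finrank ℝ V + 2),
      (fun p : (Fin k → ℝ) × (Fin k → V) => ∑ i, p.1 i • p.2 i) ''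
        (stdSimplex ℝ (Fin k) ×ˢ Set.univ.pi fun _ => S) := by
    apply subset_antisymm
    · intro x hx
      obtain ⟨ι, _, z, w, hzS, hz, hw0, hw1, rfl⟩ := eq_pos_convex_span_of_mem_convexHull hx
      have card_lt : Fintype.card ι < finrank ℝ V + 2 :=
        Nat.lt_succ_of_le <| hz.card_le_finrank_succ.trans <|
          Nat.succ_le_succ (Submodule.finrank_le _)
      let e := Fintype.equivFin ι
      simp only [Set.mem_iUnion, mem_range, Set.mem_image]
      refine ⟨Fintype.card ι, card_lt, (w ∘ e.symm, z ∘ e.symm),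
        ⟨⟨fun i => (hw0 _).le, ?_⟩, fun i _ => hzS ⟨_, rfl⟩⟩, ?_⟩
      · simpa [Function.comp_def] using (e.symm.sum_comp w).trans hw1
      · exact e.symm.sum_comp fun i => w i • z i
    · simp only [Set.iUnion_subset_iff, Set.image_subset_iff]
      rintro k - ⟨w, x⟩ ⟨⟨hw0, hw1⟩, hx⟩
      exact mem_convexHull_of_exists_fintype w x hw0 hw1 (fun i => hx i trivial) rfl
  rw [hull_eq]
  exact (range _).isCompact_biUnion fun k _ =>
    ((isCompact_stdSimplex ℝ _).prod (isCompact_univ_pi fun _ => hS)).image (by fun_prop)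

theorem Finset.le_sum_sum_mul_mul {ι : Type*} (s : Finset ι) {w : ι → ℝ} {g : ι → ι → ℝ}
    {a b : ℝ} (hw0 : ∀ i ∈ s, 0 ≤ w i) (hw1 : ∑ i ∈ s, w i = 1) (hdiag : ∀ i ∈ s, g i i = a)
    (hoff : ∀ i ∈ s, ∀ j ∈ s, b ≤ g i j) :
    b + (a - b) * ∑ i ∈ s, w i ^ 2 ≤ ∑ i ∈ s, ∑ j ∈ s, w i * w j * g i j := by
  have diag_le :
      ∑ i ∈ s, w i * w i * (g i i - b) ≤ ∑ i ∈ s, ∑ j ∈ s, w i * w j * (g i j - b) :=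
    sum_le_sum fun i hi => single_le_sum (f := fun j => w i * w j * (g i j - b))
      (fun j hj => mul_nonneg (mul_nonneg (hw0 i hi) (hw0 j hj)) (sub_nonneg.2 (hoff i hi j hj)))
      hi
  have total : ∑ i ∈ s, ∑ j ∈ s, w i * w j * b = b := by
    simp_rw [← sum_mul, ← mul_sum, ← sum_mul, hw1, one_mul]
  have diag : (a - b) * ∑ i ∈ s, w i ^ 2 = ∑ i ∈ s, w i * w i * (g i i - b) := by
    rw [mul_sum]
    exact sum_congr rfl fun i hi => by rw [hdiag i hi]; ring
  calc b + (a - b) * ∑ i ∈ s, w i ^ 2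
      ≤ b + ∑ i ∈ s, ∑ j ∈ s, w i * w j * (g i j - b) := by rw [diag]; gcongr
    _ = ∑ i ∈ s, ∑ j ∈ s, w i * w j * g i j := by
      simp only [mul_sub, sum_sub_distrib, total]
      ring

namespace LinearMap.BilinForm

variable {V : Type*} [AddCommGroup V] [Module ℝ V] (B : LinearMap.BilinForm ℝ V)

theorem apply_sum_sum {ι : Type*} (s : Finset ι) (w : ι → ℝ) (x : ι → V) :
    B (∑ i ∈ s, w i • x i) (∑ j ∈ s, w j • x j) =
      ∑ i ∈ s, ∑ j ∈ s, w i * w j * B (x i) (x j) := by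
  simp only [map_sum, LinearMap.sum_apply, map_smul, LinearMap.smul_apply, smul_eq_mul, mul_sum]
  rw [sum_comm]
  exact sum_congr rfl fun i _ => sum_congr rfl fun j _ => by ring

theorem apply_self_le_of_isMinOn (hB : B.IsSymm) {K : Set V} (hK : Convex ℝ K) {m v : V}
    (hm : m ∈ K) (hv : v ∈ K) (hmin : IsMinOn (fun v => B v v) K m) : B m m ≤ B m v := by
  set d := v - m
  have expand : ∀ ε : ℝ,
      B (m + ε • d) (m + ε • d) = B m m + ε * (2 * B m d + ε * B d d) := by
    intro ε
    simp only [map_add, map_smul, LinearMap.add_apply, LinearMap.smul_apply, smul_eq_mul,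
      hB.eq d m]
    ring
  have slope : ∀ ε ∈ Set.Ioc (0 : ℝ) 1, 0 ≤ 2 * B m d + ε * B d d := by
    rintro ε ⟨hε0, hε1⟩
    have hmem : m + ε • d ∈ K := by
      convert hK hm hv (sub_nonneg.2 hε1) hε0.le (by ring) using 1
      simp only [d]
      module
    have : B m m ≤ B (m + ε • d) (m + ε • d) := hmin hmem
    rw [expand] at this
    exact nonneg_of_mul_nonneg_right (by linarith) hε0
  have lim : Tendsto (fun ε : ℝ => 2 * B m d + ε * B d d) (𝓝[>] 0) (𝓝 (2 * B m d)) := by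
    have : Continuous fun ε : ℝ => 2 * B m d + ε * B d d := by fun_prop
    simpa using (this.tendsto 0).mono_left nhdsWithin_le_nhds
  have := ge_of_tendsto lim (eventually_of_mem (Ioc_mem_nhdsGT one_pos) slope)
  simp only [d, map_sub] at this
  linarith

theorem card_le_finrank_of_affineIndependent [FiniteDimensional ℝ V] (f : V →ₗ[ℝ] ℝ) {c : ℝ}
    (hc : c ≠ 0) {ι : Type*} [Fintype ι] {z : ι → V} (hz : AffineIndependent ℝ z)
    (hfz : ∀ i, f (z i) = c) : Fintype.card ι ≤ finrank ℝ V := by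
  cases isEmpty_or_nonempty ι
  · simp
  have span_le : vectorSpan ℝ (Set.range z) ≤ LinearMap.ker f := by
    rw [vectorSpan_def, Submodule.span_le]
    rintro _ ⟨_, ⟨i, rfl⟩, _, ⟨j, rfl⟩, rfl⟩
    simp [hfz]
  have ker_ne_top : LinearMap.ker f ≠ ⊤ := by
    obtain ⟨i⟩ := ‹Nonempty ι›
    exact fun h => hc (by rw [← hfz i, ← LinearMap.mem_ker, h]; trivial)
  have := hz.finrank_vectorSpan_add_one
  have := (Submodule.finrank_mono span_le).trans_lt (Submodule.finrank_lt ker_ne_top)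
  omega

theorem neg_apply_self_le_of_isMinOn_convexHull [FiniteDimensional ℝ V] (hB : B.IsSymm)
    {S : Set V} {c : ℝ} (hself : ∀ X ∈ S, B X X = -1) (hge : ∀ X ∈ S, ∀ Y ∈ S, -c ≤ B X Y)
    {m : V} (hm : m ∈ convexHull ℝ S) (hmin : IsMinOn (fun v => B v v) (convexHull ℝ S) m) :
    -B m m ≤ c - (c - 1) / finrank ℝ V := by
  obtain ⟨X, hX⟩ : S.Nonempty := convexHull_nonempty_iff.1 ⟨m, hm⟩
  have hmm : B m m ≤ -1 := hself X hX ▸ hmin (subset_convexHull ℝ S hX)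
  have hc : 1 ≤ c := by linarith [hge X hX X hX, hself X hX]
  obtain ⟨ι, _, z, w, hzS, hz, hw0, hw1, hsum⟩ := eq_pos_convex_span_of_mem_convexHull hm
  have foc : ∀ i, B m m ≤ B m (z i) := fun i =>
    B.apply_self_le_of_isMinOn hB (convex_convexHull ℝ S) hm
      (subset_convexHull ℝ S (hzS ⟨i, rfl⟩)) hmin
  -- `B m m` is the `w`-average of the `B m (z i)`, each of which is at least `B m m`.
  have touch : ∀ i, B m (z i) = B m m := by
    have avg : ∑ i, w i * (B m (z i) - B m m) = 0 := by
      have : ∑ i, w i * B m (z i) = B m m := by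
        simp only [← hsum, map_sum, map_smul, smul_eq_mul]
      simp only [mul_sub, sum_sub_distrib, ← sum_mul, hw1, one_mul, this, sub_self]
    intro i
    have := (sum_eq_zero_iff_of_nonneg fun j _ =>
      mul_nonneg (hw0 j).le (sub_nonneg.2 (foc j))).1 avg i (mem_univ i)
    linarith [(mul_eq_zero.1 this).resolve_left (hw0 i).ne']
  have card_le : Fintype.card ι ≤ finrank ℝ V :=
    card_le_finrank_of_affineIndependent (B m) (by linarith) hz touch
  have gram : -c + (c - 1) * ∑ i, w i ^ 2 ≤ B m m := by
    rw [← hsum, apply_sum_sum]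
    convert le_sum_sum_mul_mul _ (fun i _ => (hw0 i).le) hw1 (fun i _ => hself _ (hzS ⟨i, rfl⟩))
      fun i _ j _ => hge _ (hzS ⟨i, rfl⟩) _ (hzS ⟨j, rfl⟩) using 2
    ring
  have cauchy_schwarz : 1 ≤ finrank ℝ V * ∑ i, w i ^ 2 := by
    have := sq_sum_le_card_mul_sum_sq (s := univ) (f := w)
    rw [hw1, card_univ] at this
    have : (Fintype.card ι : ℝ) ≤ finrank ℝ V := by exact_mod_cast card_le
    nlinarith [sum_nonneg fun i (_ : i ∈ univ) => sq_nonneg (w i)]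
  have : (c - 1) / finrank ℝ V ≤ (c - 1) * ∑ i, w i ^ 2 :=
    div_le_of_le_mul₀ (Nat.cast_nonneg _) (by positivity) (by nlinarith)
  linarith

end LinearMap.BilinForm

section Minkowski

variable (E : Type*) [NormedAddCommGroup E] [InnerProductSpace ℝ E]

def minkowskiForm : LinearMap.BilinForm ℝ (ℝ × E) :=
  LinearMap.mk₂ ℝ (fun u v => ⟪u.2, v.2⟫_ℝ - u.1 * v.1)
    (fun _ _ _ => by simp only [Prod.fst_add, Prod.snd_add, inner_add_left]; ring)
    (fun _ _ _ => by
      simp only [Prod.smul_fst, Prod.smul_snd, real_inner_smul_left, smul_eq_mul]; ring)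
    (fun _ _ _ => by simp only [Prod.fst_add, Prod.snd_add, inner_add_right]; ring)
    (fun _ _ _ => by
      simp only [Prod.smul_fst, Prod.smul_snd, real_inner_smul_right, smul_eq_mul]; ring)

variable {E}

@[simp]
theorem minkowskiForm_apply (u v : ℝ × E) :
    minkowskiForm E u v = ⟪u.2, v.2⟫_ℝ - u.1 * v.1 :=
  rfl

theorem isSymm_minkowskiForm : (minkowskiForm E).IsSymm :=
  ⟨fun u v => by simp only [minkowskiForm_apply, real_inner_comm, mul_comm]⟩

theorem continuous_minkowskiForm_self : Continuous fun v : ℝ × E => minkowskiForm E v v := by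
  simp only [minkowskiForm_apply]
  fun_prop

theorem exists_minkowskiForm_center [FiniteDimensional ℝ E] {S : Set (ℝ × E)} {c : ℝ}
    (hne : S.Nonempty) (hS : IsCompact S) (hfst : ∀ X ∈ S, 0 < X.1)
    (hself : ∀ X ∈ S, minkowskiForm E X X = -1)
    (hge : ∀ X ∈ S, ∀ Y ∈ S, -c ≤ minkowskiForm E X Y) :
    ∃ m : ℝ × E, minkowskiForm E m m = -1 ∧ 0 < m.1 ∧
      ∀ X ∈ S, -minkowskiForm E m X ≤ √(c - (c - 1) / (finrank ℝ E + 1)) := by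
  set B := minkowskiForm E
  obtain ⟨m, hm, hmin⟩ := hS.convexHull_of_finiteDimensional.exists_isMinOn hne.convexHull
    continuous_minkowskiForm_self.continuousOn
  obtain ⟨X, hX⟩ := hne
  have hq : 1 ≤ -B m m := by
    have : B m m ≤ B X X := hmin (subset_convexHull ℝ S hX)
    linarith [hself X hX]
  have hbound : -B m m ≤ c - (c - 1) / (finrank ℝ E + 1) := by
    have := B.neg_apply_self_le_of_isMinOn_convexHull isSymm_minkowskiForm hself hge hm hmin
    rwa [finrank_prod, finrank_self, Nat.cast_add, Nat.cast_one, add_comm (1 : ℝ)] at this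
  have hm1 : 0 < m.1 := convexHull_min hfst
    (convex_halfSpace_gt (f := Prod.fst) ⟨fun _ _ => rfl, fun _ _ => rfl⟩ 0) hm
  set r := √(-B m m)
  have hr : 0 < r := by positivity
  have hr2 : r ^ 2 = -B m m := sq_sqrt (by linarith)
  refine ⟨r⁻¹ • m, ?_, by simp only [Prod.smul_fst, smul_eq_mul]; positivity, fun Y hY => ?_⟩
  · simp only [map_smul, LinearMap.smul_apply, smul_eq_mul]
    field_simp
    linarith
  · have foc := B.apply_self_le_of_isMinOn isSymm_minkowskiForm (convex_convexHull ℝ S) hm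
      (subset_convexHull ℝ S hY) hmin
    calc -B (r⁻¹ • m) Y = r⁻¹ * -B m Y := by simp [B]; ring
      _ ≤ r⁻¹ * r ^ 2 := by gcongr; linarith
      _ = r := by field_simp
      _ ≤ √(c - (c - 1) / (finrank ℝ E + 1)) := sqrt_le_sqrt hbound

end Minkowski

namespace PoincareBall

variable {E : Type*} [NormedAddCommGroup E]

noncomputable def dist (x y : E) : ℝ :=
  2 * arsinh (‖x - y‖ / √((1 - ‖x‖ ^ 2) * (1 - ‖y‖ ^ 2)))

theorem dist_nonneg (x y : E) : 0 ≤ dist x y := by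
  have : 0 ≤ ‖x - y‖ / √((1 - ‖x‖ ^ 2) * (1 - ‖y‖ ^ 2)) := by positivity
  exact mul_nonneg zero_le_two (arsinh_nonneg_iff.2 this)

theorem one_sub_norm_sq_pos {x : E} (hx : ‖x‖ < 1) : 0 < 1 - ‖x‖ ^ 2 := by
  nlinarith [norm_nonneg x]

variable [InnerProductSpace ℝ E]

noncomputable def toHyperboloid (x : E) : ℝ × E :=
  ((1 + ‖x‖ ^ 2) / (1 - ‖x‖ ^ 2), (2 / (1 - ‖x‖ ^ 2)) • x)

noncomputable def ofHyperboloid (X : ℝ × E) : E := (1 + X.1)⁻¹ • X.2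

theorem minkowskiForm_toHyperboloid {x y : E} (hx : ‖x‖ < 1) (hy : ‖y‖ < 1) :
    minkowskiForm E (toHyperboloid x) (toHyperboloid y) =
      -(1 + 2 * (‖x - y‖ ^ 2 / ((1 - ‖x‖ ^ 2) * (1 - ‖y‖ ^ 2)))) := by
  have := one_sub_norm_sq_pos hx
  have := one_sub_norm_sq_pos hy
  simp only [toHyperboloid, minkowskiForm_apply, real_inner_smul_left, real_inner_smul_right,
    norm_sub_sq_real]
  field_simp
  ring

theorem minkowskiForm_toHyperboloid_self {x : E} (hx : ‖x‖ < 1) :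
    minkowskiForm E (toHyperboloid x) (toHyperboloid x) = -1 := by
  simp [minkowskiForm_toHyperboloid hx hx]

theorem cosh_dist {x y : E} (hx : ‖x‖ < 1) (hy : ‖y‖ < 1) :
    cosh (dist x y) = -minkowskiForm E (toHyperboloid x) (toHyperboloid y) := by
  have hxy := mul_pos (one_sub_norm_sq_pos hx) (one_sub_norm_sq_pos hy)
  rw [dist, minkowskiForm_toHyperboloid hx hy, neg_neg, cosh_two_mul, cosh_sq, sinh_arsinh,
    div_pow, sq_sqrt hxy.le]
  ring

theorem dist_le_iff {x y : E} (hx : ‖x‖ < 1) (hy : ‖y‖ < 1) {r : ℝ} (hr : 0 ≤ r) :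
    dist x y ≤ r ↔ -minkowskiForm E (toHyperboloid x) (toHyperboloid y) ≤ cosh r := by
  rw [← cosh_dist hx hy, cosh_le_cosh, abs_of_nonneg (dist_nonneg x y), abs_of_nonneg hr]

theorem fst_toHyperboloid_pos {x : E} (hx : ‖x‖ < 1) : 0 < (toHyperboloid x).1 :=
  div_pos (by positivity) (one_sub_norm_sq_pos hx)

theorem continuousOn_toHyperboloid :
    ContinuousOn (toHyperboloid (E := E)) {x | ‖x‖ < 1} := by
  have : ∀ x ∈ {x : E | ‖x‖ < 1}, 1 - ‖x‖ ^ 2 ≠ 0 := fun x hx => (one_sub_norm_sq_pos hx).ne'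
  unfold toHyperboloid
  fun_prop (disch := assumption)

theorem norm_sq_ofHyperboloid {X : ℝ × E} (hX : minkowskiForm E X X = -1) (hX1 : 0 < X.1) :
    ‖ofHyperboloid X‖ ^ 2 = (X.1 - 1) / (X.1 + 1) := by
  have : ‖X.2‖ ^ 2 = X.1 ^ 2 - 1 := by
    rw [minkowskiForm_apply, real_inner_self_eq_norm_sq] at hX
    linarith
  rw [ofHyperboloid, norm_smul, mul_pow, this, norm_inv, Real.norm_eq_abs,
    abs_of_pos (by linarith)]
  field_simp
  ring

theorem norm_ofHyperboloid_lt_one {X : ℝ × E} (hX : minkowskiForm E X X = -1) (hX1 : 0 < X.1) :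
    ‖ofHyperboloid X‖ < 1 := by
  have := norm_sq_ofHyperboloid hX hX1
  have : (X.1 - 1) / (X.1 + 1) < 1 := by rw [div_lt_one (by linarith)]; linarith
  nlinarith [norm_nonneg (ofHyperboloid X)]

theorem toHyperboloid_ofHyperboloid {X : ℝ × E} (hX : minkowskiForm E X X = -1)
    (hX1 : 0 < X.1) : toHyperboloid (ofHyperboloid X) = X := by
  have h := norm_sq_ofHyperboloid hX hX1
  have h1 : 1 - ‖ofHyperboloid X‖ ^ 2 = 2 / (X.1 + 1) := by rw [h]; field_simp; ring
  rw [toHyperboloid, h1, h]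
  ext
  · field_simp
    ring
  · rw [ofHyperboloid, smul_smul]
    field_simp
    rw [add_comm, div_self (by linarith), one_smul]

end PoincareBall

theorem cosh_arsinh_sqrt_mul_sinh_half (n : ℕ) (t : ℝ) :
    cosh (arsinh (√(2 * n / (n + 1)) * sinh (t / 2))) =
      √(cosh t - (cosh t - 1) / (n + 1)) := by
  have cosh_eq : cosh t = 1 + 2 * sinh (t / 2) ^ 2 := by
    have := cosh_two_mul (t / 2)
    rw [mul_div_cancel₀ t two_ne_zero, cosh_sq] at this
    linarith
  rw [cosh_arsinh, mul_pow, sq_sqrt (by positivity), cosh_eq]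
  congr 1
  field_simp
  ring

open PoincareBall

theorem dekster_hyperbolic_jung_general (n : ℕ) (t : ℝ) (ht : 0 < t)
    (E : Set (EuclideanSpace ℝ (Fin n))) (hEne : E.Nonempty) (hEcomp : IsCompact E)
    (hEsub : ∀ x ∈ E, ‖x‖ < 1)
    (hdiam : ∀ x ∈ E, ∀ y ∈ E,
      2 * Real.arsinh (‖x - y‖ / Real.sqrt ((1 - ‖x‖ ^ 2) * (1 - ‖y‖ ^ 2))) ≤ t) :
    ∃ z : EuclideanSpace ℝ (Fin n), ‖z‖ < 1 ∧ ∀ x ∈ E,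
      2 * Real.arsinh (‖z - x‖ / Real.sqrt ((1 - ‖z‖ ^ 2) * (1 - ‖x‖ ^ 2))) ≤
        Real.arsinh (Real.sqrt (2 * n / (n + 1)) * Real.sinh (t / 2)) := by
  obtain ⟨m, hmm, hm1, hm⟩ := exists_minkowskiForm_center (c := cosh t)
    (hEne.image toHyperboloid)
    (hEcomp.image_of_continuousOn (continuousOn_toHyperboloid.mono hEsub))
    (Set.forall_mem_image.2 fun x hx => fst_toHyperboloid_pos (hEsub x hx))
    (Set.forall_mem_image.2 fun x hx => minkowskiForm_toHyperboloid_self (hEsub x hx))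
    (Set.forall_mem_image.2 fun x hx => Set.forall_mem_image.2 fun y hy =>
      neg_le.1 ((dist_le_iff (hEsub x hx) (hEsub y hy) ht.le).1 (hdiam x hx y hy)))
  have hz := norm_ofHyperboloid_lt_one hmm hm1
  refine ⟨ofHyperboloid m, hz, fun x hx => ?_⟩
  have hs : 0 ≤ √(2 * n / (n + 1)) * sinh (t / 2) := by
    have := sinh_pos_iff.2 (half_pos ht)
    positivity
  refine (dist_le_iff hz (hEsub x hx) (arsinh_nonneg_iff.2 hs)).2 ?_
  rw [toHyperboloid_ofHyperboloid hmm hm1, cosh_arsinh_sqrt_mul_sinh_half]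
  simpa using hm _ (Set.mem_image_of_mem _ hx)

/-- Dekster's hyperbolic Jung theorem: if `E` is a nonempty compact subset of the open
unit ball of `ℝⁿ` (`n ≥ 2`) of hyperbolic diameter at most `t`, then `E` is contained
in a closed hyperbolic ball of radius `arsinh (√(2n/(n+1)) · sinh (t/2))`, where the
hyperbolic distance is `ρ(x,y) = 2 · arsinh (‖x - y‖ / √((1 - ‖x‖²)(1 - ‖y‖²)))`. -/
theorem dekster_hyperbolic_jung (n : ℕ) (hn : 2 ≤ n) (t : ℝ) (ht : 0 < t)
    (E : Set (EuclideanSpace ℝ (Fin n))) (hEne : E.Nonempty) (hEcomp : IsCompact E)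
    (hEsub : ∀ x ∈ E, ‖x‖ < 1)
    (hdiam : ∀ x ∈ E, ∀ y ∈ E,
      2 * Real.arsinh (‖x - y‖ / Real.sqrt ((1 - ‖x‖ ^ 2) * (1 - ‖y‖ ^ 2))) ≤ t) :
    ∃ z : EuclideanSpace ℝ (Fin n), ‖z‖ < 1 ∧ ∀ x ∈ E,
      2 * Real.arsinh (‖z - x‖ / Real.sqrt ((1 - ‖z‖ ^ 2) * (1 - ‖x‖ ^ 2))) ≤
        Real.arsinh (Real.sqrt (2 * n / (n + 1)) * Real.sinh (t / 2)) :=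
  dekster_hyperbolic_jung_general n t ht E hEne hEcomp hEsub hdiam
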